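/- Let f be an entropic-uncertainty bound for N MUBs in dimension d. Then every biseparable density operator ρ on (ℂ^d)^{⊗3} satisfies 𝒞_N(ρ) ≤ log₂ d − f/(3N). Equivalently, any tripartite density operator ρ on (ℂ^d)^{⊗3} with 𝒞_N(ρ) > log₂ d − f/(3N) is genuinely tripartite entangled (not biseparable). -/

import Mathlib

/-!
Since `I(B⁽ˡ⁾ : B⁽ˡ̄⁾) = H(B⁽ˡ⁾) - H(B⁽ˡ⁾ | B⁽ˡ̄⁾) ≤ log₂ d - H(B⁽ˡ⁾ | B⁽ˡ̄⁾)`, it suffices to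
show that the conditional entropies, summed over the `N` bases and the three sites, are at
least `f`. The outcome distribution is linear in the state and conditional entropy is concave
in the joint distribution (log-sum inequality), so for `ρ = ∑ⱼ ∑ₗ pⱼₗ σⱼₗ ⊗ τⱼₗ` the sum is at
least `∑ⱼ ∑ₗ pⱼₗ ∑ₖ H(Bₖ⁽ˡ⁾ | σⱼₗ)`: in a branch split at `l` the outcome at `l` is independent
of the others, so its conditional entropy is the entropy of measuring `σⱼₗ`, and the
conditional entropies at the other two sites are nonnegative. The entropic uncertainty bound
makes each inner sum at least `f`.
-/

open scoped BigOperators ComplexOrder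

namespace Paper

noncomputable section

/-- Base-2 Shannon entropy of a finitely indexed probability vector. -/
def shannon {α : Type*} [Fintype α] (p : α → ℝ) : ℝ :=
  ∑ a, -(p a * Real.logb 2 (p a))

/-- Joint outcome type for `n` subsystems of local dimension `d`. -/
abbrev Idx (n d : ℕ) := Fin n → Fin d

/-- The projector `|ψ⟩⟨ψ|`. -/
def proj {α : Type*} (ψ : α → ℂ) : Matrix α α ℂ :=
  Matrix.of fun x y => ψ x * (starRingEnd ℂ) (ψ y)

/-- A density operator: positive semidefinite with trace one. -/
def IsDensityOp {α : Type*} [Fintype α] [DecidableEq α] (ρ : Matrix α α ℂ) : Prop :=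
  ρ.PosSemidef ∧ ρ.trace = 1

/-- `B` is an orthonormal basis of `ℂ^d` (`B i` is the `i`-th basis vector). -/
def IsONB {d : ℕ} (B : Fin d → Fin d → ℂ) : Prop :=
  ∀ i j, (∑ x, (starRingEnd ℂ) (B i x) * B j x) = if i = j then 1 else 0

/-- Two bases of `ℂ^d` are mutually unbiased. -/
def MutUnbiased {d : ℕ} (B B' : Fin d → Fin d → ℂ) : Prop :=
  ∀ i j, ‖∑ x, (starRingEnd ℂ) (B i x) * B' j x‖ ^ 2 = 1 / d

/-- Joint outcome distribution of measuring the orthonormal basis `B l` on each factor `l`. -/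
def jointProb {n d : ℕ} (ρ : Matrix (Idx n d) (Idx n d) ℂ)
    (B : Fin n → Fin d → Fin d → ℂ) (i : Idx n d) : ℝ :=
  (∑ x : Idx n d, ∑ y : Idx n d,
    (∏ l, (starRingEnd ℂ) (B l (i l) (x l))) * ρ x y * (∏ l, B l (i l) (y l))).re

/-- Marginal distribution of subsystem `l`. -/
def margAt {n d : ℕ} (p : Idx n d → ℝ) (l : Fin n) (i : Fin d) : ℝ :=
  ∑ x : Idx n d, if x l = i then p x else 0

/-- Insert outcome `i` at position `l` into a tuple of outcomes of the other subsystems. -/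
def insertAt {n d : ℕ} (l : Fin n) (i : Fin d) (g : {m : Fin n // m ≠ l} → Fin d) : Idx n d :=
  fun m => if h : m = l then i else g ⟨m, h⟩

/-- Marginal distribution of all subsystems except `l`. -/
def margRest {n d : ℕ} (p : Idx n d → ℝ) (l : Fin n)
    (g : {m : Fin n // m ≠ l} → Fin d) : ℝ :=
  ∑ i : Fin d, p (insertAt l i g)

/-- Mutual information `I(B⁽ˡ⁾ : B⁽ˡ̄⁾)` between the outcome at subsystem `l` and the
outcomes at the remaining subsystems, for the joint outcome distribution `p`. -/
def mutualInfo {n d : ℕ} (p : Idx n d → ℝ) (l : Fin n) : ℝ :=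
  shannon (margAt p l) + shannon (margRest p l) - shannon p

/-- The correlation function `C_N(ρ, {B_k^{(l)}})`. -/
def CNval {n d : ℕ} (N : ℕ) (ρ : Matrix (Idx n d) (Idx n d) ℂ)
    (B : Fin N → Fin n → Fin d → Fin d → ℂ) : ℝ :=
  (1 / (n * N)) * ∑ k, ∑ l, mutualInfo (jointProb ρ (B k)) l

/-- `B k l` is, for each subsystem `l`, a family of `N` pairwise mutually unbiased
orthonormal bases (indexed by `k`). -/
def ValidMUBs {n d : ℕ} (N : ℕ) (B : Fin N → Fin n → Fin d → Fin d → ℂ) : Prop :=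
  (∀ k l, IsONB (B k l)) ∧ ∀ l k k', k ≠ k' → MutUnbiased (B k l) (B k' l)

/-- The set of values `C_N(ρ, ·)` over all admissible choices of MUBs;
`𝒞_N(ρ)` is the supremum of this set. -/
def CNvalues {n d : ℕ} (N : ℕ) (ρ : Matrix (Idx n d) (Idx n d) ℂ) : Set ℝ :=
  {x | ∃ B : Fin N → Fin n → Fin d → Fin d → ℂ, ValidMUBs N B ∧ x = CNval N ρ B}

/-- Single-subsystem reduced state `tr_{l̄} ρ`. -/
def reducedAt {n d : ℕ} (ρ : Matrix (Idx n d) (Idx n d) ℂ) (l : Fin n) :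
    Matrix (Fin d) (Fin d) ℂ :=
  Matrix.of fun i j =>
    ∑ g : {m : Fin n // m ≠ l} → Fin d, ρ (insertAt l i g) (insertAt l j g)

/-- `ω_d = exp(2πi/d)`. -/
def ω (d : ℕ) : ℂ := Complex.exp (2 * Real.pi * Complex.I / d)

/-- The generalized Pauli operator `X_d`. -/
def Xmat (d : ℕ) : Matrix (Fin d) (Fin d) ℂ :=
  Matrix.of fun i j => if (i : ℕ) = ((j : ℕ) + 1) % d then 1 else 0

/-- The generalized Pauli operator `Z_d`. -/
def Zmat (d : ℕ) : Matrix (Fin d) (Fin d) ℂ :=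
  Matrix.of fun i j => if i = j then ω d ^ (i : ℕ) else 0

/-- The generalized Pauli operator `S_{d,(k₁,k₂)} = X_d^{k₁} Z_d^{k₂}`. -/
def Smat (d : ℕ) (k : Fin d × Fin d) : Matrix (Fin d) (Fin d) ℂ :=
  Xmat d ^ (k.1 : ℕ) * Zmat d ^ (k.2 : ℕ)

/-- Apply a local operator `A l` to each tensor factor of a multipartite vector `ψ`,
i.e. the vector `(⊗_l A l) ψ`. -/
def applyLocal {n d : ℕ} (A : Fin n → Matrix (Fin d) (Fin d) ℂ) (ψ : Idx n d → ℂ) :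
    Idx n d → ℂ :=
  fun x => ∑ y : Idx n d, (∏ l, A l (x l) (y l)) * ψ y

/-- The computational (standard) basis of `ℂ^d`, the eigenbasis of `Z_d`. -/
def stdBasis (d : ℕ) : Fin d → Fin d → ℂ :=
  fun i x => if x = i then 1 else 0

/-- The Fourier basis of `ℂ^d`, the eigenbasis of `X_d`. -/
def fourierBasis (d : ℕ) : Fin d → Fin d → ℂ :=
  fun i x => (((Real.sqrt d)⁻¹ : ℝ) : ℂ) * ω d ^ ((i : ℕ) * (x : ℕ))

/-- The `n`-fold tensor product `⊗_l A l` as a matrix on the joint system. -/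
def tensorN {n d : ℕ} (A : Fin n → Matrix (Fin d) (Fin d) ℂ) :
    Matrix (Idx n d) (Idx n d) ℂ :=
  Matrix.of fun x y => ∏ l, A l (x l) (y l)

/-- Full separability of an `n`-partite density operator. -/
def FullySep {n d : ℕ} (ρ : Matrix (Idx n d) (Idx n d) ℂ) : Prop :=
  ∃ (J : ℕ) (p : Fin J → ℝ) (σ : Fin J → Fin n → Matrix (Fin d) (Fin d) ℂ),
    (∀ j, 0 ≤ p j) ∧ (∑ j, p j) = 1 ∧ (∀ j l, IsDensityOp (σ j l)) ∧
    ρ = ∑ j, p j • tensorN (σ j)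

/-- generalized GHZ state `(1/√d) ∑_i |i⟩^{⊗n}`. -/
def GHZvec (d n : ℕ) : Idx n d → ℂ :=
  fun x => if ∀ l l', x l = x l' then (((Real.sqrt d)⁻¹ : ℝ) : ℂ) else 0


/-- Outcome distribution of measuring the basis `B` on the single-system state `σ`. -/
def prob1 {d : ℕ} (σ : Matrix (Fin d) (Fin d) ℂ) (B : Fin d → Fin d → ℂ) (i : Fin d) : ℝ :=
  (∑ x, ∑ y, (starRingEnd ℂ) (B i x) * σ x y * B i y).re

/-- `f` is an entropic-uncertainty bound for `N` MUBs in dimension `d`: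
`∑_k H(B_k|σ) ≥ f` for every set of `N` MUBs and every density operator `σ`. -/
def EntropicBound (d N : ℕ) (f : ℝ) : Prop :=
  ∀ B : Fin N → Fin d → Fin d → ℂ, (∀ k, IsONB (B k)) →
    (∀ k k', k ≠ k' → MutUnbiased (B k) (B k')) →
    ∀ σ : Matrix (Fin d) (Fin d) ℂ, IsDensityOp σ →
      f ≤ ∑ k, shannon (prob1 σ (B k))

/-- Restriction of a joint outcome to the subsystems other than `l`. -/
def restrictAt {n d : ℕ} (l : Fin n) (x : Idx n d) : {m : Fin n // m ≠ l} → Fin d :=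
  fun m => x m.1

/-- The operator `A ⊗ T` placed so that `A` acts on subsystem `l` of three subsystems and
`T` on the remaining two. -/
def assembleAt {d : ℕ} (l : Fin 3) (A : Matrix (Fin d) (Fin d) ℂ)
    (T : Matrix ({m : Fin 3 // m ≠ l} → Fin d) ({m : Fin 3 // m ≠ l} → Fin d) ℂ) :
    Matrix (Idx 3 d) (Idx 3 d) ℂ :=
  Matrix.of fun x y => A (x l) (y l) * T (restrictAt l x) (restrictAt l y)

/-- Biseparability of a tripartite density operator. -/
def Bisep3 {d : ℕ} (ρ : Matrix (Idx 3 d) (Idx 3 d) ℂ) : Prop :=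
  ∃ (J : ℕ) (p : Fin J → Fin 3 → ℝ)
    (σ : Fin J → Fin 3 → Matrix (Fin d) (Fin d) ℂ)
    (τ : (j : Fin J) → (l : Fin 3) →
      Matrix ({m : Fin 3 // m ≠ l} → Fin d) ({m : Fin 3 // m ≠ l} → Fin d) ℂ),
    (∀ j l, 0 ≤ p j l) ∧ (∑ j, ∑ l, p j l) = 1 ∧
    (∀ j l, IsDensityOp (σ j l)) ∧ (∀ j l, IsDensityOp (τ j l)) ∧
    ρ = ∑ j, ∑ l, p j l • assembleAt l (σ j l) (τ j l)

open Real Finset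

lemma mul_log_add_sub_le_mul_log_div {u v t : ℝ} (hu : 0 ≤ u) (hv : 0 ≤ v)
    (huv : v = 0 → u = 0) (ht : 0 < t) : u * log t + u - v * t ≤ u * log (u / v) := by
  rcases hu.eq_or_lt with rfl | hu
  · simpa using mul_nonneg hv ht.le
  have hv : 0 < v := hv.lt_of_ne fun h => hu.ne' (huv h.symm)
  have h := mul_le_mul_of_nonneg_left (log_le_sub_one_of_pos (by positivity : 0 < t * v / u)) hu.le
  rw [log_div (by positivity) hu.ne', log_mul ht.ne' hv.ne', mul_sub_one,
    mul_div_cancel₀ _ hu.ne'] at h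
  rw [log_div hu.ne' hv.ne']
  linarith

/-- The log-sum inequality. -/
theorem sum_mul_log_div_sum_le {ι : Type*} [Fintype ι] {u v : ι → ℝ} (hu : ∀ i, 0 ≤ u i)
    (hv : ∀ i, 0 ≤ v i) (huv : ∀ i, v i = 0 → u i = 0) :
    (∑ i, u i) * log ((∑ i, u i) / ∑ i, v i) ≤ ∑ i, u i * log (u i / v i) := by
  rcases (sum_nonneg fun i _ => hu i).eq_or_lt with hU | hU
  · have hu0 : ∀ i, u i = 0 := fun i =>
      (sum_eq_zero_iff_of_nonneg fun i _ => hu i).1 hU.symm i (mem_univ i)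
    simp [hu0]
  rcases (sum_nonneg fun i _ => hv i).eq_or_lt with hV | hV
  · have hv0 : ∀ i, v i = 0 := fun i =>
      (sum_eq_zero_iff_of_nonneg fun i _ => hv i).1 hV.symm i (mem_univ i)
    simp [hv0]
  calc (∑ i, u i) * log ((∑ i, u i) / ∑ i, v i)
      = ∑ i, (u i * log ((∑ i, u i) / ∑ i, v i) + u i - v i * ((∑ i, u i) / ∑ i, v i)) := by
        rw [sum_sub_distrib, sum_add_distrib, ← sum_mul, ← sum_mul, mul_div_cancel₀ _ hV.ne']
        ring
    _ ≤ ∑ i, u i * log (u i / v i) :=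
        sum_le_sum fun i _ => mul_log_add_sub_le_mul_log_div (hu i) (hv i) (huv i) (by positivity)

section Entropy

variable {α β : Type*} [Fintype α] [Fintype β]

lemma shannon_eq_sum_negMulLog (p : α → ℝ) : shannon p = (∑ a, negMulLog (p a)) / log 2 := by
  simp only [shannon, negMulLog, logb, sum_div]
  exact sum_congr rfl fun a _ => by ring

lemma shannon_comp_equiv (e : β ≃ α) (p : α → ℝ) : shannon (p ∘ e) = shannon p :=
  Equiv.sum_comp e fun a => -(p a * logb 2 (p a))

theorem shannon_le_logb_card {p : α → ℝ} (hp : ∀ a, 0 ≤ p a) (hp1 : ∑ a, p a = 1) :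
    shannon p ≤ logb 2 (Fintype.card α) := by
  have h := sum_mul_log_div_sum_le (v := fun _ => 1) hp (fun _ => zero_le_one) (by simp)
  simp only [hp1, sum_const, card_univ, nsmul_eq_mul, mul_one, one_div, log_inv, div_one,
    one_mul] at h
  rw [shannon_eq_sum_negMulLog, logb, div_le_div_iff_of_pos_right (log_pos one_lt_two)]
  simp only [negMulLog, neg_mul, sum_neg_distrib]
  linarith

end Entropy

lemma le_sum_fst {α β : Type*} [Fintype α] {p : α × β → ℝ} (hp : ∀ x, 0 ≤ p x) (a : α) (b : β) :
    p (a, b) ≤ ∑ a', p (a', b) :=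
  single_le_sum (f := fun a' => p (a', b)) (fun _ _ => hp _) (mem_univ a)

section CondEntropy

variable {α β : Type*} [Fintype α] [Fintype β]

/-- `H(A|B)` in bits, for a joint weight `p` on `α × β` that need not be normalized. -/
def condEntropy (p : α × β → ℝ) : ℝ :=
  shannon p - shannon fun b => ∑ a, p (a, b)

lemma shannon_smul (c : ℝ) (p : α → ℝ) :
    shannon (c • p) = c * shannon p + (∑ a, p a) * negMulLog c / log 2 := by
  simp only [shannon_eq_sum_negMulLog, Pi.smul_apply, smul_eq_mul, negMulLog_mul,
    sum_add_distrib, ← sum_mul, ← mul_sum]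
  ring

theorem condEntropy_smul (c : ℝ) (p : α × β → ℝ) : condEntropy (c • p) = c * condEntropy p := by
  have hmarg : (fun b => ∑ a, (c • p) (a, b)) = c • fun b => ∑ a, p (a, b) := by
    ext b
    simp [mul_sum]
  rw [condEntropy, condEntropy, hmarg, shannon_smul, shannon_smul, Fintype.sum_prod_type_right]
  ring

theorem condEntropy_prod {q : α → ℝ} {r : β → ℝ} (hq : ∑ a, q a = 1) (hr : ∑ b, r b = 1) :
    condEntropy (fun x => q x.1 * r x.2) = shannon q := by
  simp only [condEntropy, shannon_eq_sum_negMulLog, Fintype.sum_prod_type, negMulLog_mul,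
    sum_add_distrib, ← sum_mul, ← mul_sum, hq, hr, negMulLog_one]
  ring

lemma condEntropy_eq_neg_sum_mul_log {p : α × β → ℝ} (hp : ∀ x, 0 ≤ p x) :
    condEntropy p = -(∑ b, ∑ a, p (a, b) * log (p (a, b) / ∑ a', p (a', b))) / log 2 := by
  have hterm : ∀ a b, p (a, b) * log (p (a, b) / ∑ a', p (a', b))
      = p (a, b) * log (p (a, b)) - p (a, b) * log (∑ a', p (a', b)) := by
    intro a b
    rcases (hp (a, b)).eq_or_lt with h | h
    · simp [← h]
    · rw [log_div h.ne' (h.trans_le (le_sum_fst hp a b)).ne', mul_sub]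
  rw [condEntropy, shannon_eq_sum_negMulLog, shannon_eq_sum_negMulLog, ← sub_div,
    Fintype.sum_prod_type_right, ← sum_sub_distrib]
  simp only [hterm, negMulLog, neg_mul, sum_neg_distrib, sum_sub_distrib, ← sum_mul]
  ring

theorem condEntropy_nonneg {p : α × β → ℝ} (hp : ∀ x, 0 ≤ p x) : 0 ≤ condEntropy p := by
  rw [condEntropy_eq_neg_sum_mul_log hp]
  refine div_nonneg (neg_nonneg.2 (sum_nonpos fun b _ => sum_nonpos fun a _ => ?_))
    (log_nonneg one_le_two)
  have hsum : 0 ≤ ∑ a', p (a', b) := sum_nonneg fun a' _ => hp _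
  exact mul_nonpos_of_nonneg_of_nonpos (hp _)
    (log_nonpos (div_nonneg (hp _) hsum) (div_le_one_of_le₀ (le_sum_fst hp a b) hsum))

theorem sum_condEntropy_le {ι : Type*} [Fintype ι] {P : ι → α × β → ℝ}
    (hP : ∀ j x, 0 ≤ P j x) : ∑ j, condEntropy (P j) ≤ condEntropy fun x => ∑ j, P j x := by
  simp only [condEntropy_eq_neg_sum_mul_log (hP _),
    condEntropy_eq_neg_sum_mul_log fun x => sum_nonneg fun j _ => hP j x, ← sum_div,
    sum_neg_distrib]
  gcongr ?_ / _
  rw [neg_le_neg_iff]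
  conv_rhs => rw [sum_comm]
  refine sum_le_sum fun b _ => ?_
  conv_rhs => rw [sum_comm]
  refine sum_le_sum fun a _ => ?_
  rw [sum_comm (f := fun a' j => P j (a', b))]
  exact sum_mul_log_div_sum_le (fun j => hP j _) (fun j => sum_nonneg fun a' _ => hP j _)
    fun j hj => (sum_eq_zero_iff_of_nonneg fun a' _ => hP j (a', b)).1 hj a (mem_univ a)

end CondEntropy

section Split

variable {n d : ℕ}

@[simp] lemma insertAt_self (l : Fin n) (i : Fin d) (g : {m : Fin n // m ≠ l} → Fin d) :
    insertAt l i g l = i := by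
  simp [insertAt]

@[simp] lemma insertAt_coe (l : Fin n) (i : Fin d) (g : {m : Fin n // m ≠ l} → Fin d)
    (m : {m : Fin n // m ≠ l}) : insertAt l i g m = g m := by
  simp [insertAt, m.2]

@[simp] lemma restrictAt_insertAt (l : Fin n) (i : Fin d) (g : {m : Fin n // m ≠ l} → Fin d) :
    restrictAt l (insertAt l i g) = g := by
  funext m
  simp [restrictAt, insertAt, m.2]

lemma insertAt_restrictAt (l : Fin n) (x : Idx n d) : insertAt l (x l) (restrictAt l x) = x := by
  funext m
  by_cases h : m = l
  · subst h
    simp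
  · simp [insertAt, restrictAt, h]

def splitEquiv (l : Fin n) : Fin d × ({m : Fin n // m ≠ l} → Fin d) ≃ Idx n d where
  toFun x := insertAt l x.1 x.2
  invFun x := (x l, restrictAt l x)
  left_inv x := by simp
  right_inv := insertAt_restrictAt l

lemma sum_idx_eq_sum_insertAt {M : Type*} [AddCommMonoid M] (l : Fin n) (F : Idx n d → M) :
    ∑ x, F x = ∑ i, ∑ g, F (insertAt l i g) := by
  rw [← (splitEquiv l).sum_comp, Fintype.sum_prod_type]
  rfl

lemma prod_eq_mul_prod_ne {M : Type*} [CommMonoid M] (l : Fin n) (F : Fin n → M) :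
    ∏ m, F m = F l * ∏ m : {m : Fin n // m ≠ l}, F m := by
  rw [Fintype.prod_eq_mul_prod_compl l, ← prod_subtype ({l}ᶜ : Finset (Fin n)) fun m => by simp]

theorem mutualInfo_eq_sub_condEntropy (p : Idx n d → ℝ) (l : Fin n) :
    mutualInfo p l = shannon (margAt p l) - condEntropy (p ∘ splitEquiv l) := by
  have hrest : (fun g => ∑ i, (p ∘ splitEquiv l) (i, g)) = margRest p l := rfl
  rw [condEntropy, shannon_comp_equiv, hrest, mutualInfo]
  ring

theorem shannon_margAt_le {p : Idx n d → ℝ} (hp : ∀ x, 0 ≤ p x) (hp1 : ∑ x, p x = 1)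
    (l : Fin n) : shannon (margAt p l) ≤ logb 2 d := by
  have hmarg : ∑ i, margAt p l i = 1 := by
    simp only [margAt]
    rw [sum_comm]
    simpa using hp1
  have hnonneg : ∀ i, 0 ≤ margAt p l i := fun i =>
    sum_nonneg fun x _ => by split_ifs <;> simp [hp x]
  have h := shannon_le_logb_card hnonneg hmarg
  rwa [Fintype.card_fin] at h

end Split

section Measurement

open Matrix ComplexConjugate

variable {α : Type*} [Fintype α]

def quadForm (M : Matrix α α ℂ) (v : α → ℂ) : ℂ :=
  ∑ x, ∑ y, conj (v x) * M x y * v y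

lemma quadForm_nonneg {M : Matrix α α ℂ} (hM : M.PosSemidef) (v : α → ℂ) :
    0 ≤ quadForm M v := by
  convert hM.dotProduct_mulVec_nonneg v using 1
  simp only [quadForm, dotProduct, mulVec, Pi.star_apply, RCLike.star_def, mul_sum, mul_assoc]

lemma re_mul_of_nonneg_left {z : ℂ} (hz : 0 ≤ z) (w : ℂ) : (z * w).re = z.re * w.re := by
  rw [Complex.mul_re, ← (Complex.nonneg_iff.1 hz).2, zero_mul, sub_zero]

lemma quadForm_sum {ι : Type*} (s : Finset ι) (M : ι → Matrix α α ℂ) (v : α → ℂ) :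
    quadForm (∑ j ∈ s, M j) v = ∑ j ∈ s, quadForm (M j) v := by
  simp only [quadForm, Matrix.sum_apply, mul_sum, sum_mul]
  conv_rhs =>
    rw [sum_comm]
    enter [2, x]
    rw [sum_comm]

lemma quadForm_smul (c : ℝ) (M : Matrix α α ℂ) (v : α → ℂ) :
    quadForm (c • M) v = c * quadForm M v := by
  simp only [quadForm, Matrix.smul_apply, Complex.real_smul, mul_sum]
  exact sum_congr rfl fun x _ => sum_congr rfl fun y _ => by ring

lemma sum_quadForm_eq_trace [DecidableEq α] {κ : Type*} [Fintype κ] (M : Matrix α α ℂ)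
    (v : κ → α → ℂ) (hv : ∀ x y, ∑ i, conj (v i x) * v i y = if x = y then 1 else 0) :
    ∑ i, quadForm M (v i) = M.trace := by
  have hx : ∀ x y, ∑ i, conj (v i x) * M x y * v i y = if x = y then M x y else 0 := by
    intro x y
    simp_rw [mul_right_comm _ (M x y), ← sum_mul, hv, ite_mul, one_mul, zero_mul]
  simp only [quadForm]
  rw [sum_comm]
  simp_rw [sum_comm (γ := κ), hx]
  simp [trace]

theorem IsONB.sum_conj_mul {d : ℕ} {B : Fin d → Fin d → ℂ} (hB : IsONB B) (x y : Fin d) :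
    ∑ i, conj (B i x) * B i y = if x = y then 1 else 0 := by
  let U : Matrix (Fin d) (Fin d) ℂ := Matrix.of B
  have hU : U * Uᴴ = 1 := by
    ext i j
    simpa [U, mul_apply, one_apply, mul_comm, apply_ite conj] using congrArg conj (hB i j)
  simpa [U, mul_apply, one_apply] using congrArg (fun A => A x y) (mul_eq_one_comm.1 hU)

end Measurement

section ProductMeasurement

open Matrix ComplexConjugate

variable {ι : Type*} [Fintype ι] {d : ℕ}

def prodVec (C : ι → Fin d → Fin d → ℂ) (g : ι → Fin d) : (ι → Fin d) → ℂ :=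
  fun y => ∏ m, C m (g m) (y m)

variable [DecidableEq ι]

def prodProb (T : Matrix (ι → Fin d) (ι → Fin d) ℂ) (C : ι → Fin d → Fin d → ℂ)
    (g : ι → Fin d) : ℝ :=
  (quadForm T (prodVec C g)).re

lemma sum_conj_prodVec_mul {C : ι → Fin d → Fin d → ℂ} (hC : ∀ m, IsONB (C m))
    (x y : ι → Fin d) : ∑ g, conj (prodVec C g x) * prodVec C g y = if x = y then 1 else 0 := by
  simp only [prodVec, map_prod, ← prod_mul_distrib]
  rw [← Fintype.prod_sum fun m c => conj (C m c (x m)) * C m c (y m)]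
  simp only [(hC _).sum_conj_mul, prod_boole, mem_univ, true_implies, funext_iff]

lemma prodProb_nonneg {T : Matrix (ι → Fin d) (ι → Fin d) ℂ} (hT : T.PosSemidef)
    (C : ι → Fin d → Fin d → ℂ) (g : ι → Fin d) : 0 ≤ prodProb T C g :=
  (Complex.nonneg_iff.1 (quadForm_nonneg hT _)).1

lemma sum_prodProb {T : Matrix (ι → Fin d) (ι → Fin d) ℂ} (hT : T.trace = 1)
    {C : ι → Fin d → Fin d → ℂ} (hC : ∀ m, IsONB (C m)) : ∑ g, prodProb T C g = 1 := by
  simp only [prodProb]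
  rw [← Complex.re_sum, sum_quadForm_eq_trace T _ (sum_conj_prodVec_mul hC), hT,
    Complex.one_re]

end ProductMeasurement

section Outcomes

open ComplexConjugate

variable {d : ℕ}

lemma prob1_nonneg {σ : Matrix (Fin d) (Fin d) ℂ} (hσ : σ.PosSemidef) (B : Fin d → Fin d → ℂ)
    (i : Fin d) : 0 ≤ prob1 σ B i :=
  (Complex.nonneg_iff.1 (quadForm_nonneg hσ (B i))).1

lemma sum_prob1 {σ : Matrix (Fin d) (Fin d) ℂ} (hσ : σ.trace = 1) {B : Fin d → Fin d → ℂ}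
    (hB : IsONB B) : ∑ i, prob1 σ B i = 1 := by
  change ∑ i, (quadForm σ (B i)).re = 1
  rw [← Complex.re_sum, sum_quadForm_eq_trace σ B hB.sum_conj_mul, hσ, Complex.one_re]

variable {n : ℕ}

lemma jointProb_eq_prodProb (ρ : Matrix (Idx n d) (Idx n d) ℂ) (B : Fin n → Fin d → Fin d → ℂ) :
    jointProb ρ B = prodProb ρ B := by
  ext i
  simp only [jointProb, prodProb, quadForm, prodVec, map_prod]

lemma jointProb_sum_smul {ι κ : Type*} [Fintype ι] [Fintype κ] (c : ι → κ → ℝ)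
    (A : ι → κ → Matrix (Idx n d) (Idx n d) ℂ) (B : Fin n → Fin d → Fin d → ℂ) (x : Idx n d) :
    jointProb (∑ j, ∑ l, c j l • A j l) B x = ∑ j, ∑ l, c j l * jointProb (A j l) B x := by
  simp only [jointProb_eq_prodProb, prodProb, quadForm_sum, quadForm_smul, Complex.re_sum,
    Complex.re_ofReal_mul]

lemma prodVec_insertAt (l : Fin n) (B : Fin n → Fin d → Fin d → ℂ) (x : Idx n d) (i : Fin d)
    (g : {m : Fin n // m ≠ l} → Fin d) :
    prodVec B x (insertAt l i g)
      = B l (x l) i * prodVec (fun m : {m : Fin n // m ≠ l} => B m) (restrictAt l x) g := by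
  simp only [prodVec, prod_eq_mul_prod_ne l, insertAt_self, insertAt_coe, restrictAt]

lemma quadForm_assembleAt (l : Fin 3) (A : Matrix (Fin d) (Fin d) ℂ)
    (T : Matrix ({m : Fin 3 // m ≠ l} → Fin d) ({m : Fin 3 // m ≠ l} → Fin d) ℂ)
    {u : Fin d → ℂ} {w : ({m : Fin 3 // m ≠ l} → Fin d) → ℂ} {v : Idx 3 d → ℂ}
    (hv : ∀ i g, v (insertAt l i g) = u i * w g) :
    quadForm (assembleAt l A T) v = quadForm A u * quadForm T w := by
  simp only [quadForm, sum_idx_eq_sum_insertAt l, sum_mul_sum, hv, assembleAt, Matrix.of_apply,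
    insertAt_self, restrictAt_insertAt, map_mul]
  exact sum_congr rfl fun i _ => sum_congr rfl fun g _ => sum_congr rfl fun i' _ =>
    sum_congr rfl fun g' _ => by ring

end Outcomes

section Biseparable

variable {d : ℕ}

lemma jointProb_assembleAt (l : Fin 3) {σ : Matrix (Fin d) (Fin d) ℂ} (hσ : σ.PosSemidef)
    (τ : Matrix ({m : Fin 3 // m ≠ l} → Fin d) ({m : Fin 3 // m ≠ l} → Fin d) ℂ)
    (B : Fin 3 → Fin d → Fin d → ℂ) (x : Idx 3 d) :
    jointProb (assembleAt l σ τ) B x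
      = prob1 σ (B l) (x l)
        * prodProb τ (fun m : {m : Fin 3 // m ≠ l} => B m) (restrictAt l x) := by
  rw [jointProb_eq_prodProb, prodProb, quadForm_assembleAt l σ τ (prodVec_insertAt l B x),
    re_mul_of_nonneg_left (quadForm_nonneg hσ _)]
  rfl

/-- In a product branch split at `l`, the outcome at `l` is independent of the others. -/
theorem condEntropy_jointProb_assembleAt (l : Fin 3) {σ : Matrix (Fin d) (Fin d) ℂ}
    (hσ : IsDensityOp σ)
    {τ : Matrix ({m : Fin 3 // m ≠ l} → Fin d) ({m : Fin 3 // m ≠ l} → Fin d) ℂ}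
    (hτ : IsDensityOp τ) {B : Fin 3 → Fin d → Fin d → ℂ} (hB : ∀ l, IsONB (B l)) :
    condEntropy (jointProb (assembleAt l σ τ) B ∘ splitEquiv l) = shannon (prob1 σ (B l)) := by
  have hprod : jointProb (assembleAt l σ τ) B ∘ splitEquiv l
      = fun y => prob1 σ (B l) y.1 * prodProb τ (fun m : {m : Fin 3 // m ≠ l} => B m) y.2 := by
    ext y
    simp [splitEquiv, jointProb_assembleAt l hσ.1]
  rw [hprod, condEntropy_prod (sum_prob1 hσ.2 (hB l)) (sum_prodProb hτ.2 fun m => hB m)]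

lemma jointProb_assembleAt_nonneg (l : Fin 3) {σ : Matrix (Fin d) (Fin d) ℂ} (hσ : σ.PosSemidef)
    {τ : Matrix ({m : Fin 3 // m ≠ l} → Fin d) ({m : Fin 3 // m ≠ l} → Fin d) ℂ}
    (hτ : τ.PosSemidef) (B : Fin 3 → Fin d → Fin d → ℂ) (x : Idx 3 d) :
    0 ≤ jointProb (assembleAt l σ τ) B x := by
  rw [jointProb_assembleAt l hσ]
  exact mul_nonneg (prob1_nonneg hσ _ _) (prodProb_nonneg hτ _ _)

/-- Concavity of conditional entropy, after discarding in each branch the conditional entropies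
at the two sites where it does not split. -/
theorem sum_mul_shannon_le_sum_condEntropy {ι : Type*} [Fintype ι] {c : ι → Fin 3 → ℝ}
    (hc : ∀ j l, 0 ≤ c j l) {σ : ι → Fin 3 → Matrix (Fin d) (Fin d) ℂ}
    (hσ : ∀ j l, IsDensityOp (σ j l))
    {τ : (j : ι) → (l : Fin 3) →
      Matrix ({m : Fin 3 // m ≠ l} → Fin d) ({m : Fin 3 // m ≠ l} → Fin d) ℂ}
    (hτ : ∀ j l, IsDensityOp (τ j l)) {B : Fin 3 → Fin d → Fin d → ℂ} (hB : ∀ l, IsONB (B l)) :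
    ∑ j, ∑ l, c j l * shannon (prob1 (σ j l) (B l))
      ≤ ∑ l, condEntropy
          (jointProb (∑ j, ∑ l, c j l • assembleAt l (σ j l) (τ j l)) B ∘ splitEquiv l) := by
  let P : ι × Fin 3 → Idx 3 d → ℝ :=
    fun jl => c jl.1 jl.2 • jointProb (assembleAt jl.2 (σ jl.1 jl.2) (τ jl.1 jl.2)) B
  have hP : ∀ jl x, 0 ≤ P jl x := fun jl x =>
    mul_nonneg (hc _ _) (jointProb_assembleAt_nonneg _ (hσ _ _).1 (hτ _ _).1 B x)
  have hmix : jointProb (∑ j, ∑ l, c j l • assembleAt l (σ j l) (τ j l)) B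
      = fun x => ∑ jl, P jl x := by
    ext x
    rw [jointProb_sum_smul, Fintype.sum_prod_type]
    rfl
  calc ∑ j, ∑ l, c j l * shannon (prob1 (σ j l) (B l))
      = ∑ jl : ι × Fin 3, condEntropy (P jl ∘ splitEquiv jl.2) := by
        rw [Fintype.sum_prod_type]
        refine sum_congr rfl fun j _ => sum_congr rfl fun l _ => ?_
        rw [← condEntropy_jointProb_assembleAt l (hσ j l) (hτ j l) hB]
        exact (condEntropy_smul _ _).symm
    _ ≤ ∑ jl : ι × Fin 3, ∑ l, condEntropy (P jl ∘ splitEquiv l) :=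
        sum_le_sum fun jl _ => single_le_sum (f := fun l => condEntropy (P jl ∘ splitEquiv l))
          (fun l _ => condEntropy_nonneg fun y => hP jl _) (mem_univ jl.2)
    _ = ∑ l, ∑ jl : ι × Fin 3, condEntropy (P jl ∘ splitEquiv l) := sum_comm
    _ ≤ ∑ l, condEntropy
          (jointProb (∑ j, ∑ l, c j l • assembleAt l (σ j l) (τ j l)) B ∘ splitEquiv l) := by
        rw [hmix]
        exact sum_le_sum fun l _ => sum_condEntropy_le fun jl y => hP jl _

end Biseparable

/-- Lemma 7: every biseparable tripartite state satisfies `𝒞_N(ρ) ≤ log₂ d − f/(3N)`;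
hence any state exceeding this bound is genuinely tripartite entangled. -/
theorem biseparable_CN_bound
    (d N : ℕ) (f : ℝ) (hf : EntropicBound d N f)
    (ρ : Matrix (Idx 3 d) (Idx 3 d) ℂ) (hρ : IsDensityOp ρ) (hbisep : Bisep3 ρ) :
    ∀ x ∈ CNvalues N ρ, x ≤ Real.logb 2 d - f / (3 * N) := by
  rcases N.eq_zero_or_pos with rfl | hN
  · rintro _ ⟨B, -, rfl⟩
    simpa [CNval, logb] using div_nonneg (log_natCast_nonneg d) (log_nonneg one_le_two)
  rintro _ ⟨B, ⟨hONB, hMUB⟩, rfl⟩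
  obtain ⟨J, c, σ, τ, hc0, hc1, hσ, hτ, hρeq⟩ := hbisep
  have hcond : f ≤ ∑ k, ∑ l, condEntropy (jointProb ρ (B k) ∘ splitEquiv l) :=
    calc f = ∑ j, ∑ l, c j l * f := by simp only [← sum_mul, hc1, one_mul]
      _ ≤ ∑ j, ∑ l, c j l * ∑ k, shannon (prob1 (σ j l) (B k l)) := by
        refine sum_le_sum fun j _ => sum_le_sum fun l _ => mul_le_mul_of_nonneg_left ?_ (hc0 j l)
        exact hf _ (fun k => hONB k l) (fun k k' => hMUB l k k') _ (hσ j l)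
      _ = ∑ k, ∑ j, ∑ l, c j l * shannon (prob1 (σ j l) (B k l)) := by
        simp only [mul_sum]
        exact (sum_congr rfl fun j _ => sum_comm).trans sum_comm
      _ ≤ ∑ k, ∑ l, condEntropy (jointProb ρ (B k) ∘ splitEquiv l) := by
        rw [hρeq]
        exact sum_le_sum fun k _ => sum_mul_shannon_le_sum_condEntropy hc0 hσ hτ (hONB k)
  have hmarg : ∀ k l, shannon (margAt (jointProb ρ (B k)) l) ≤ logb 2 d := by
    intro k l
    rw [jointProb_eq_prodProb]
    exact shannon_margAt_le (prodProb_nonneg hρ.1 _) (sum_prodProb hρ.2 (hONB k)) l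
  have hMI : ∑ k, ∑ l, mutualInfo (jointProb ρ (B k)) l ≤ 3 * N * logb 2 d - f := by
    have hH : ∑ k, ∑ l, shannon (margAt (jointProb ρ (B k)) l)
        ≤ ∑ _k : Fin N, ∑ _l : Fin 3, logb 2 d :=
      sum_le_sum fun k _ => sum_le_sum fun l _ => hmarg k l
    simp only [sum_const, card_univ, Fintype.card_fin, nsmul_eq_mul, Nat.cast_ofNat] at hH
    simp only [mutualInfo_eq_sub_condEntropy, sum_sub_distrib]
    linarith
  calc CNval N ρ B ≤ 1 / (3 * N) * (3 * N * logb 2 d - f) := by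
        rw [CNval, Nat.cast_ofNat]
        gcongr
    _ = logb 2 d - f / (3 * N) := by
        field_simp

end
end Paper
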